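/- arXiv:2206.15112 — 2 statements merged into one kernel-verified Lean document; each statement's English description precedes it below -/
import Mathlib

section
/- For every real R ≥ 0, the integral over the Euclidean disc satisfies ∫_{B_{ℝ²}(0,R)} (1 − 2t₁²)/(1 + 2t₁²)² dt₁ dt₂ = π ( 1 − (1 + 2R²)^{−1/2} ). -/
/-! Integrate first along the horizontal chords `|x| < √(R² - y²)`: since
`(1 - 2x²)/(1 + 2x²)² = (x/(1 + 2x²))'`, the chord at height `y` contributes
`2√(R² - y²)/(1 + 2R² - 2y²)`. This has the primitive
`arcsin (y/R) - arcsin (y/(R √(1 + 2R² - 2y²))) / √(1 + 2R²)`, which takes the values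
`±(π/2)(1 - 1/√(1 + 2R²))` at `y = ±R`. -/

open MeasureTheory Set Metric Real

lemma mem_ball_zero_iff_sq_add_sq {R : ℝ} (hR : 0 ≤ R) (x y : ℝ) :
    !₂[x, y] ∈ ball (0 : EuclideanSpace ℝ (Fin 2)) R ↔ x ^ 2 + y ^ 2 < R ^ 2 := by
  rw [mem_ball_zero_iff, ← pow_lt_pow_iff_left₀ (norm_nonneg _) hR two_ne_zero,
    EuclideanSpace.real_norm_sq_eq, Fin.sum_univ_two]
  rfl

lemma sq_add_sq_lt_iff_mem_Ioo (x y R : ℝ) :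
    x ^ 2 + y ^ 2 < R ^ 2 ↔ x ∈ Ioo (-√(R ^ 2 - y ^ 2)) √(R ^ 2 - y ^ 2) := by
  rw [mem_Ioo, ← abs_lt, lt_sqrt (abs_nonneg x), sq_abs, lt_sub_iff_add_lt]

lemma setIntegral_ball_eq_intervalIntegral_intervalIntegral {f : EuclideanSpace ℝ (Fin 2) → ℝ}
    (hf : Continuous f) {R : ℝ} (hR : 0 ≤ R) :
    ∫ t in ball 0 R, f t = ∫ y in -R..R, ∫ x in -√(R ^ 2 - y ^ 2)..√(R ^ 2 - y ^ 2), f !₂[x, y] := by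
  let e : ℝ × ℝ ≃ᵐ EuclideanSpace ℝ (Fin 2) :=
    MeasurableEquiv.finTwoArrow.symm.trans (MeasurableEquiv.toLp 2 (Fin 2 → ℝ))
  have he : MeasurePreserving e (volume.prod volume) volume :=
    (PiLp.volume_preserving_toLp (Fin 2)).comp (volume_preserving_finTwoArrow ℝ).symm
  have he_apply (x y : ℝ) : e (x, y) = !₂[x, y] := rfl
  have hball : Integrable ((ball 0 R).indicator f) :=
    (integrable_indicator_iff measurableSet_ball).2 <|
      (hf.continuousOn.integrableOn_compact (isCompact_closedBall 0 R)).mono_set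
        ball_subset_closedBall
  have hsection (x y : ℝ) : (ball 0 R).indicator f (e (x, y)) =
      (Ioo (-√(R ^ 2 - y ^ 2)) √(R ^ 2 - y ^ 2)).indicator (fun x ↦ f !₂[x, y]) x := by
    simp only [indicator, he_apply, mem_ball_zero_iff_sq_add_sq hR, sq_add_sq_lt_iff_mem_Ioo]
  rw [← integral_indicator measurableSet_ball, ← he.integral_comp',
    integral_prod_symm (fun p ↦ (ball 0 R).indicator f (e p))
      ((he.integrable_comp_emb e.measurableEmbedding).2 hball)]
  have hchord (y : ℝ) : ∫ x, (ball 0 R).indicator f (e (x, y)) =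
      ∫ x in -√(R ^ 2 - y ^ 2)..√(R ^ 2 - y ^ 2), f !₂[x, y] := by
    simp only [hsection, integral_indicator measurableSet_Ioo, ← integral_Ioc_eq_integral_Ioo]
    rw [intervalIntegral.integral_of_le (neg_le_self (sqrt_nonneg _))]
  simp only [hchord]
  rw [intervalIntegral.integral_of_le (neg_le_self hR)]
  refine (setIntegral_eq_integral_of_forall_compl_eq_zero fun y hy ↦ ?_).symm
  have : R ^ 2 - y ^ 2 ≤ 0 := by
    rw [mem_Ioc, not_and_or, not_lt, not_le] at hy
    rcases hy with hy | hy <;> nlinarith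
  rw [sqrt_eq_zero'.2 this, neg_zero, intervalIntegral.integral_same]

lemma HasDerivAt.arcsin_of_one_sub_sq_eq {φ : ℝ → ℝ} {φ' w y : ℝ} (hφ : HasDerivAt φ φ' y)
    (hw : 0 < w) (hsq : 1 - φ y ^ 2 = w ^ 2) : HasDerivAt (fun y ↦ arcsin (φ y)) (φ' / w) y := by
  have hlt : |φ y| < 1 := by
    rw [← sq_lt_one_iff_abs_lt_one]; nlinarith
  have h := (hasDerivAt_arcsin (abs_lt.1 hlt).1.ne' (abs_lt.1 hlt).2.ne).comp y hφ
  rwa [hsq, sqrt_sq hw.le, one_div_mul_eq_div] at h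

lemma hasDerivAt_div_one_add_two_mul_sq (x : ℝ) :
    HasDerivAt (fun x : ℝ ↦ x / (1 + 2 * x ^ 2)) ((1 - 2 * x ^ 2) / (1 + 2 * x ^ 2) ^ 2) x := by
  refine ((hasDerivAt_id' x).div (((hasDerivAt_pow 2 x).const_mul 2).const_add 1)
    (by positivity)).congr_deriv ?_
  ring

lemma integral_one_sub_two_mul_sq_div_sq (s : ℝ) :
    ∫ x in -s..s, (1 - 2 * x ^ 2) / (1 + 2 * x ^ 2) ^ 2 = 2 * s / (1 + 2 * s ^ 2) := by
  have hcont : Continuous fun x : ℝ ↦ (1 - 2 * x ^ 2) / (1 + 2 * x ^ 2) ^ 2 :=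
    by fun_prop (disch := intro x; positivity)
  rw [intervalIntegral.integral_eq_sub_of_hasDerivAt
    (fun x _ ↦ hasDerivAt_div_one_add_two_mul_sq x) (hcont.intervalIntegrable _ _)]
  ring

/- The second arcsin is `arctan (y / (√(1 + 2R²) √(R² - y²)))`, rewritten so as to stay
continuous at `y = ±R`. -/
lemma hasDerivAt_arcsin_div_sub_arcsin_div {R y : ℝ} (hy : y ∈ Ioo (-R) R) :
    HasDerivAt (fun y ↦ arcsin (y / R) - arcsin (y / (R * √(1 + 2 * R ^ 2 - 2 * y ^ 2))) /
      √(1 + 2 * R ^ 2)) (2 * √(R ^ 2 - y ^ 2) / (1 + 2 * R ^ 2 - 2 * y ^ 2)) y := by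
  obtain ⟨hy₁, hy₂⟩ := hy
  have hR : 0 < R := by linarith
  set c := √(1 + 2 * R ^ 2)
  set u := √(R ^ 2 - y ^ 2)
  set q := √(1 + 2 * R ^ 2 - 2 * y ^ 2) with hq_def
  have hc : 0 < c := sqrt_pos.2 (by positivity)
  have hu : 0 < u := sqrt_pos.2 (by nlinarith)
  have hq : 0 < q := sqrt_pos.2 (by nlinarith)
  have hc2 : c ^ 2 = 1 + 2 * R ^ 2 := sq_sqrt (by positivity)
  have hu2 : u ^ 2 = R ^ 2 - y ^ 2 := sq_sqrt (by nlinarith)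
  have hq2 : q ^ 2 = 1 + 2 * R ^ 2 - 2 * y ^ 2 := sq_sqrt (by nlinarith)
  have d₁ : HasDerivAt (fun y ↦ arcsin (y / R)) (1 / u) y := by
    refine (((hasDerivAt_id' y).div_const R).arcsin_of_one_sub_sq_eq (w := u / R) (by positivity)
      (by field_simp; linarith)).congr_deriv ?_
    field_simp
  have dq : HasDerivAt (fun y ↦ √(1 + 2 * R ^ 2 - 2 * y ^ 2)) (-2 * y / q) y := by
    refine ((((hasDerivAt_pow 2 y).const_mul 2).const_sub (1 + 2 * R ^ 2)).sqrt
      (by nlinarith)).congr_deriv ?_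
    rw [← hq_def]
    field_simp; ring
  have d₂ : HasDerivAt (fun y ↦ arcsin (y / (R * √(1 + 2 * R ^ 2 - 2 * y ^ 2))))
      (c / (q ^ 2 * u)) y := by
    refine (((hasDerivAt_id' y).div (dq.const_mul R) (by positivity)).arcsin_of_one_sub_sq_eq
      (φ := fun y ↦ y / (R * √(1 + 2 * R ^ 2 - 2 * y ^ 2))) (w := c * u / (R * q)) (by positivity)
      (by
        rw [← hq_def]
        field_simp
        linear_combination R ^ 2 * hq2 - c ^ 2 * hu2 - (R ^ 2 - y ^ 2) * hc2)).congr_deriv ?_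
    rw [← hq_def]
    field_simp
    linear_combination hq2 - hc2
  refine (d₁.sub (d₂.div_const c)).congr_deriv ?_
  rw [← hq2]
  field_simp
  linear_combination hq2 - 2 * hu2

lemma integral_two_mul_sqrt_div {R : ℝ} (hR : 0 ≤ R) :
    ∫ y in -R..R, 2 * √(R ^ 2 - y ^ 2) / (1 + 2 * R ^ 2 - 2 * y ^ 2) =
      π * (1 - (√(1 + 2 * R ^ 2))⁻¹) := by
  rcases hR.eq_or_lt with rfl | hR
  · simp
  have hpos : ∀ y ∈ Icc (-R) R, 0 < 1 + 2 * R ^ 2 - 2 * y ^ 2 := by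
    rintro y ⟨h₁, h₂⟩; nlinarith
  rw [intervalIntegral.integral_eq_sub_of_hasDerivAt_of_le (neg_le_self hR.le) ?cont
    (fun y hy ↦ hasDerivAt_arcsin_div_sub_arcsin_div hy) ?int]
  case cont =>
    refine (continuous_arcsin.comp_continuousOn (by fun_prop)).sub
      ((continuous_arcsin.comp_continuousOn ?_).div_const _)
    fun_prop (disch := exact fun y hy ↦ mul_ne_zero hR.ne' (sqrt_ne_zero'.2 (hpos y hy)))
  case int =>
    exact ContinuousOn.intervalIntegrable (by
      rw [uIcc_of_le (neg_le_self hR.le)]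
      fun_prop (disch := exact fun y hy ↦ (hpos y hy).ne'))
  simp [hR.ne']
  ring

theorem stmt2 (R : ℝ) (hR : 0 ≤ R) :
    ∫ t in Metric.ball (0 : EuclideanSpace ℝ (Fin 2)) R,
        (1 - 2 * (t 0) ^ 2) / (1 + 2 * (t 0) ^ 2) ^ 2 =
      Real.pi * (1 - (1 + 2 * R ^ 2) ^ (-(1 : ℝ) / 2)) := by
  calc _ = ∫ y in -R..R, ∫ x in -√(R ^ 2 - y ^ 2)..√(R ^ 2 - y ^ 2),
          (1 - 2 * x ^ 2) / (1 + 2 * x ^ 2) ^ 2 := by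
        rw [setIntegral_ball_eq_intervalIntegral_intervalIntegral
          (by fun_prop (disch := intro x; positivity)) hR]
        simp
    _ = ∫ y in -R..R, 2 * √(R ^ 2 - y ^ 2) / (1 + 2 * R ^ 2 - 2 * y ^ 2) := by
        refine intervalIntegral.integral_congr fun y hy ↦ ?_
        rw [uIcc_of_le (neg_le_self hR), mem_Icc] at hy
        have hy : y ^ 2 ≤ R ^ 2 := by nlinarith
        simp only [integral_one_sub_two_mul_sq_div_sq, sq_sqrt (sub_nonneg.2 hy)]
        ring
    _ = π * (1 - (√(1 + 2 * R ^ 2))⁻¹) := integral_two_mul_sqrt_div hR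
    _ = _ := by rw [sqrt_eq_rpow, ← rpow_neg (by positivity)]; norm_num
end

section
/- For every integer n ≥ 1 and every real x > 0, the strict inequality P_n(x) > (1 + x)^{n − 3/2} holds; that is, the Taylor polynomial of order n−1 at 0 of the function x ↦ (1+x)^{n−3/2} strictly exceeds the function itself for all x > 0. -/
/-! Write `T_{α,n}` for the Taylor polynomial of order `n` at `0` of `(1 + x)^α`; we show
`(1 + x)^α < T_{α,n}(x)` for `x > 0` whenever `n - 1 < α < n`, by induction on `n`. For `n = 0` this
is `(1 + x)^α < 1` with `α < 0`. For the step, `F = T_{α,n} - (1 + x)^α` vanishes at `0`, and since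
`(ℓ + 1) C(α, ℓ + 1) = α C(α - 1, ℓ)` its derivative is `α (T_{α-1,n-1} - (1 + x)^(α-1))`, which is
positive on `(0, ∞)` by induction because `α > 0`; hence `F > 0` there. -/

open Finset

/-- The generalized binomial coefficient `C(α, ℓ) = α(α−1)⋯(α−ℓ+1)/ℓ!`. -/
noncomputable def genChoose (α : ℝ) (ℓ : ℕ) : ℝ :=
  (∏ j ∈ Finset.range ℓ, (α - j)) / (Nat.factorial ℓ)

/-- The polynomial `P_n(X) = ∑_{ℓ=0}^{n−1} C(n−3/2, ℓ) X^ℓ`,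
the Taylor polynomial of order `n−1` at `0` of `x ↦ (1+x)^{n−3/2}`. -/
noncomputable def Ppoly (n : ℕ) (x : ℝ) : ℝ :=
  ∑ ℓ ∈ Finset.range n, genChoose ((n : ℝ) - 3/2) ℓ * x ^ ℓ

/-- The Taylor polynomial of order `n - 1` at `0` of `x ↦ (1 + x) ^ α`. -/
noncomputable def binomialTaylor (α : ℝ) (n : ℕ) (x : ℝ) : ℝ :=
  ∑ ℓ ∈ range n, genChoose α ℓ * x ^ ℓ

lemma genChoose_zero (α : ℝ) : genChoose α 0 = 1 := by
  simp [genChoose]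

lemma succ_mul_genChoose_succ (α : ℝ) (k : ℕ) :
    ((k : ℝ) + 1) * genChoose α (k + 1) = α * genChoose (α - 1) k := by
  have hprod : ∏ j ∈ range (k + 1), (α - j) = α * ∏ j ∈ range k, (α - 1 - j) := by
    rw [prod_range_succ', mul_comm]
    push_cast
    simp only [sub_zero, sub_sub, add_comm (1 : ℝ)]
  have hk : (k.factorial : ℝ) ≠ 0 := by positivity
  simp only [genChoose, hprod, Nat.factorial_succ]
  push_cast
  field_simp

lemma binomialTaylor_succ_zero (α : ℝ) (n : ℕ) : binomialTaylor α (n + 1) 0 = 1 := by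
  simp [binomialTaylor, sum_range_succ', genChoose_zero]

lemma hasDerivAt_binomialTaylor (α : ℝ) (n : ℕ) (x : ℝ) :
    HasDerivAt (binomialTaylor α (n + 1)) (α * binomialTaylor (α - 1) n x) x := by
  have hshift : binomialTaylor α (n + 1) =
      fun y ↦ ∑ ℓ ∈ range n, genChoose α (ℓ + 1) * y ^ (ℓ + 1) + 1 := by
    funext y
    simp [binomialTaylor, sum_range_succ', genChoose_zero]
  rw [hshift]
  refine ((HasDerivAt.fun_sum fun ℓ _ ↦
    (hasDerivAt_pow (ℓ + 1) x).const_mul (genChoose α (ℓ + 1))).add_const 1).congr_deriv ?_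
  simp only [binomialTaylor, mul_sum, Nat.add_sub_cancel, Nat.cast_add, Nat.cast_one]
  refine sum_congr rfl fun ℓ _ ↦ ?_
  linear_combination x ^ ℓ * succ_mul_genChoose_succ α ℓ

theorem rpow_lt_binomialTaylor (n : ℕ) {α : ℝ} (hα₁ : (n : ℝ) - 1 < α) (hα₂ : α < n)
    {x : ℝ} (hx : 0 < x) : (1 + x) ^ α < binomialTaylor α (n + 1) x := by
  induction n generalizing α x with
  | zero =>
    simp only [binomialTaylor, zero_add, range_one, sum_singleton, genChoose_zero, pow_zero,
      mul_one]
    exact Real.rpow_lt_one_of_one_lt_of_neg (by linarith) (by simpa using hα₂)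
  | succ n ih =>
    push_cast at hα₁ hα₂
    have hαpos : 0 < α := by linarith [(n.cast_nonneg : (0 : ℝ) ≤ n)]
    set F : ℝ → ℝ := fun y ↦ binomialTaylor α (n + 2) y - (1 + y) ^ α
    have hF : ∀ y, 0 < y → HasDerivAt F
        (α * (binomialTaylor (α - 1) (n + 1) y - (1 + y) ^ (α - 1))) y := by
      intro y hy
      have hpow : HasDerivAt (fun y : ℝ ↦ (1 + y) ^ α) (α * (1 + y) ^ (α - 1)) y := by
        simpa using ((hasDerivAt_id y).const_add 1).rpow_const (p := α) (Or.inl (by positivity))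
      rw [mul_sub]
      exact (hasDerivAt_binomialTaylor α (n + 1) y).fun_sub hpow
    have hcont : ContinuousOn F (Set.Ici 0) := by
      refine ContinuousOn.sub (fun y _ ↦ (hasDerivAt_binomialTaylor α (n + 1) y)
        |>.continuousAt.continuousWithinAt) ?_
      exact (continuous_const_add 1).continuousOn.rpow_const
        fun y hy ↦ Or.inl (by linarith [Set.mem_Ici.mp hy])
    have hmono : StrictMonoOn F (Set.Ici 0) := by
      refine strictMonoOn_of_deriv_pos (convex_Ici 0) hcont fun y hy ↦ ?_
      rw [interior_Ici] at hy
      rw [(hF y hy).deriv]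
      exact mul_pos hαpos
        (sub_pos.mpr (ih (by linarith) (by linarith) hy))
    have := hmono Set.self_mem_Ici hx.le hx
    simp only [F, binomialTaylor_succ_zero, add_zero, Real.one_rpow, sub_self] at this
    linarith

theorem stmt8 (n : ℕ) (hn : 1 ≤ n) (x : ℝ) (hx : 0 < x) :
    (1 + x) ^ ((n : ℝ) - 3/2) < Ppoly n x := by
  obtain ⟨m, rfl⟩ := Nat.exists_eq_add_of_le' hn
  -- `Ppoly (m + 1)` is `binomialTaylor (m + 1 - 3/2) (m + 1)` by definition.
  exact rpow_lt_binomialTaylor m (by push_cast; linarith) (by push_cast; linarith) hx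
end
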